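/- arXiv:1609.04988 — 2 statements merged into one kernel-verified Lean document; each statement's English description precedes it below -/
import Mathlib

section
/- Balance of mass and energy (Lemma 3.2): Let (ρ_e, m_e)_{e∈E} be a smooth solution on [0,T]. Then for every t ∈ [0,T], the total mass M(t) is differentiable with d/dt M(t) = 0, and the total energy E(t) is differentiable with d/dt E(t) + D(t) = 0. -/
/-!
Differentiating under the integral sign, the energy of an edge changes at the rate `∫ ∂ₜη`.
The mass and momentum equations give the pointwise identity `∂ₜη + ∂ₓ(m h) = -d`, with
`h = m²/(2ρ²) + P'(ρ) - a ρ⁻² ∂ₓm` and `d` the dissipation density, so each edge loses its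
dissipation plus the flux `m h` through its two ends. Summed over the edges, these fluxes
regroup by vertex: at a boundary vertex `m = 0`, and at an interior vertex `h` is common to
all incident ends, so the flux is `h` times the Kirchhoff sum of `m`, which vanishes. Mass is
the same argument with `h = 1` and no dissipation.
-/

/-- A *smooth solution* of the compressible flow problem on the pipe network
determined by `src`, `dst`, `ℓ` on the time interval `[0, T]`, with adiabatic
exponent `γ`, viscosity coefficients `a`, friction coefficients `b` and pressure
coefficients `c`.  The fluid state on edge `e` is given by the density `ρ e t x`
and the mass flux `m e t x`; the functions `ρt, ρx, mt, mx, mxx` are the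
corresponding partial derivatives.  The pressure law is `p_e(ρ) = c e * ρ ^ γ`,
with potential energy density `P_e(ρ) = c e * ρ ^ γ / (γ - 1)` and
`P_e'(ρ) = c e * γ / (γ - 1) * ρ ^ (γ - 1)`.  A vertex `w` is interior if at least
two edges are incident, and a function `f_e` is evaluated at the vertex `src e`
as `f e t 0` and at `dst e` as `f e t (ℓ e)`. -/
def SmoothSolution {V E : Type} [Fintype V] [Fintype E] [DecidableEq V]
    (src dst : E → V) (ℓ : E → ℝ) (γ : ℝ) (a b c : E → ℝ) (T : ℝ)
    (ρ m ρt ρx mt mx mxx : E → ℝ → ℝ → ℝ) : Prop :=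
  -- uniform positivity of the density
  (∃ ρlow > (0 : ℝ), ∀ e, ∀ t ∈ Set.Icc 0 T, ∀ x ∈ Set.Icc 0 (ℓ e), ρlow ≤ ρ e t x) ∧
  -- ρ and m are continuously differentiable, and ∂ₓ m is continuously differentiable in x
  (∀ e, ∀ t ∈ Set.Icc 0 T, ∀ x ∈ Set.Icc 0 (ℓ e),
      HasDerivAt (fun s => ρ e s x) (ρt e t x) t ∧
      HasDerivAt (fun y => ρ e t y) (ρx e t x) x ∧
      HasDerivAt (fun s => m e s x) (mt e t x) t ∧
      HasDerivAt (fun y => m e t y) (mx e t x) x ∧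
      HasDerivAt (fun y => mx e t y) (mxx e t x) x) ∧
  (∀ e, ContinuousOn (fun q : ℝ × ℝ => ρ e q.1 q.2) (Set.Icc 0 T ×ˢ Set.Icc 0 (ℓ e))) ∧
  (∀ e, ContinuousOn (fun q : ℝ × ℝ => m e q.1 q.2) (Set.Icc 0 T ×ˢ Set.Icc 0 (ℓ e))) ∧
  (∀ e, ContinuousOn (fun q : ℝ × ℝ => ρt e q.1 q.2) (Set.Icc 0 T ×ˢ Set.Icc 0 (ℓ e))) ∧
  (∀ e, ContinuousOn (fun q : ℝ × ℝ => ρx e q.1 q.2) (Set.Icc 0 T ×ˢ Set.Icc 0 (ℓ e))) ∧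
  (∀ e, ContinuousOn (fun q : ℝ × ℝ => mt e q.1 q.2) (Set.Icc 0 T ×ˢ Set.Icc 0 (ℓ e))) ∧
  (∀ e, ContinuousOn (fun q : ℝ × ℝ => mx e q.1 q.2) (Set.Icc 0 T ×ˢ Set.Icc 0 (ℓ e))) ∧
  (∀ e, ∀ t ∈ Set.Icc 0 T, ContinuousOn (fun y => mxx e t y) (Set.Icc 0 (ℓ e))) ∧
  -- (i) conservation of mass:  ∂ₜ ρ + ∂ₓ m = 0
  (∀ e, ∀ t ∈ Set.Icc 0 T, ∀ x ∈ Set.Icc 0 (ℓ e), ρt e t x + mx e t x = 0) ∧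
  -- (ii) balance of momentum:
  --   ∂ₜ m + ∂ₓ (m²/ρ + p(ρ)) = a ρ ∂ₓ (ρ⁻² ∂ₓ m) - b |m| m / ρ
  (∀ e, ∀ t ∈ Set.Icc 0 T, ∀ x ∈ Set.Icc 0 (ℓ e), ∃ F G : ℝ,
      HasDerivAt (fun y => m e t y ^ 2 / ρ e t y + c e * ρ e t y ^ γ) F x ∧
      HasDerivAt (fun y => mx e t y / ρ e t y ^ 2) G x ∧
      mt e t x + F = a e * ρ e t x * G - b e * |m e t x| * m e t x / ρ e t x) ∧
  -- (iii) coupling conditions at interior vertices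
  (∀ w : V, 2 ≤ (Finset.univ.filter fun e : E => src e = w ∨ dst e = w).card →
    ∀ t ∈ Set.Icc 0 T,
      ((∑ e : E, ((if dst e = w then m e t (ℓ e) else 0)
          - (if src e = w then m e t 0 else 0))) = 0) ∧
      (∃ h : ℝ, ∀ e : E,
        (src e = w →
          m e t 0 ^ 2 / (2 * ρ e t 0 ^ 2) + c e * γ / (γ - 1) * ρ e t 0 ^ (γ - 1)
            - a e / ρ e t 0 ^ 2 * mx e t 0 = h) ∧
        (dst e = w →
          m e t (ℓ e) ^ 2 / (2 * ρ e t (ℓ e) ^ 2)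
            + c e * γ / (γ - 1) * ρ e t (ℓ e) ^ (γ - 1)
            - a e / ρ e t (ℓ e) ^ 2 * mx e t (ℓ e) = h))) ∧
  -- (iv) no-flux boundary condition at boundary vertices
  (∀ w : V, (Finset.univ.filter fun e : E => src e = w ∨ dst e = w).card < 2 →
    ∀ t ∈ Set.Icc 0 T, ∀ e : E,
      (src e = w → m e t 0 = 0) ∧ (dst e = w → m e t (ℓ e) = 0))

open Set MeasureTheory Function intervalIntegral

section ParametricIntegral

variable {f ft : ℝ → ℝ → ℝ} {t₀ t₁ a b : ℝ}

theorem continuousOn_intervalIntegral_of_continuousOn_prod (hab : a ≤ b)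
    (hf : ContinuousOn (uncurry f) (Icc t₀ t₁ ×ˢ Icc a b)) :
    ContinuousOn (fun s => ∫ x in a..b, f s x) (Icc t₀ t₁) := by
  obtain ⟨C, hC⟩ := (isCompact_Icc.prod isCompact_Icc).exists_bound_of_continuousOn hf
  have hIoc : uIoc a b ⊆ Icc a b := by rw [uIoc_of_le hab]; exact Ioc_subset_Icc_self
  intro s₀ hs₀
  refine continuousWithinAt_of_dominated_interval (bound := fun _ => C) ?_ ?_
    intervalIntegrable_const ?_
  · filter_upwards [self_mem_nhdsWithin] with s hs
    exact ((hf.uncurry_left s hs).mono hIoc).aestronglyMeasurable measurableSet_uIoc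
  · filter_upwards [self_mem_nhdsWithin] with s hs
    exact .of_forall fun x hx => hC (s, x) ⟨hs, hIoc hx⟩
  · exact .of_forall fun x hx => hf.uncurry_right x (hIoc hx) s₀ hs₀

theorem intervalIntegral_comm_of_continuousOn {c d : ℝ} (hab : a ≤ b) (hcd : c ≤ d)
    (hf : ContinuousOn (uncurry f) (Icc a b ×ˢ Icc c d)) :
    ∫ x in a..b, ∫ y in c..d, f x y = ∫ y in c..d, ∫ x in a..b, f x y := by
  simp only [integral_of_le hab, integral_of_le hcd]
  refine integral_integral_swap ?_
  rw [Measure.prod_restrict, ← Measure.volume_eq_prod]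
  exact (hf.integrableOn_compact (isCompact_Icc.prod isCompact_Icc)).mono_set
    (prod_mono Ioc_subset_Icc_self Ioc_subset_Icc_self)

variable (hab : a ≤ b)
    (hderiv : ∀ s ∈ Icc t₀ t₁, ∀ x ∈ Icc a b, HasDerivAt (f · x) (ft s x) s)
    (hf : ContinuousOn (uncurry f) (Icc t₀ t₁ ×ˢ Icc a b))
    (hft : ContinuousOn (uncurry ft) (Icc t₀ t₁ ×ˢ Icc a b))
include hab hderiv hf hft

theorem intervalIntegral_eq_add_integral_intervalIntegral_deriv {s : ℝ} (hs : s ∈ Icc t₀ t₁) :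
    ∫ x in a..b, f s x = (∫ x in a..b, f t₀ x) + ∫ u in t₀..s, ∫ x in a..b, ft u x := by
  have ht₀ : t₀ ∈ Icc t₀ t₁ := ⟨le_rfl, hs.1.trans hs.2⟩
  have hsub : Icc t₀ s ⊆ Icc t₀ t₁ := Icc_subset_Icc le_rfl hs.2
  have hslice : ∀ u ∈ Icc t₀ t₁, IntervalIntegrable (f u) volume a b := fun u hu =>
    ((hf.uncurry_left u hu).mono (uIcc_of_le hab).subset).intervalIntegrable
  have hftc : ContinuousOn (uncurry ft) (Icc t₀ s ×ˢ Icc a b) :=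
    hft.mono (prod_mono hsub subset_rfl)
  have hpointwise : ∀ x ∈ uIcc a b, ∫ u in t₀..s, ft u x = f s x - f t₀ x := by
    intro x hx
    rw [uIcc_of_le hab] at hx
    refine integral_eq_sub_of_hasDerivAt (fun u hu => hderiv u ?_ x hx) ?_
    · exact hsub (uIcc_of_le hs.1 ▸ hu)
    · exact ((hftc.uncurry_right x hx).mono (uIcc_of_le hs.1).subset).intervalIntegrable
  have hswap : ∫ u in t₀..s, ∫ x in a..b, ft u x = ∫ x in a..b, ∫ u in t₀..s, ft u x :=
    intervalIntegral_comm_of_continuousOn hs.1 hab hftc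
  rw [hswap, integral_congr hpointwise, integral_sub (hslice s hs) (hslice t₀ ht₀)]
  ring

theorem hasDerivWithinAt_intervalIntegral_of_continuousOn {t : ℝ} (ht : t ∈ Icc t₀ t₁) :
    HasDerivWithinAt (fun s => ∫ x in a..b, f s x) (∫ x in a..b, ft t x) (Icc t₀ t₁) t := by
  have hH := continuousOn_intervalIntegral_of_continuousOn_prod hab hft
  have : Fact (t ∈ Icc t₀ t₁) := ⟨ht⟩
  have hprimitive : HasDerivWithinAt (fun s => ∫ u in t₀..s, ∫ x in a..b, ft u x)
      (∫ x in a..b, ft t x) (Icc t₀ t₁) t :=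
    integral_hasDerivWithinAt_right
      ((hH.mono (Icc_subset_Icc le_rfl ht.2)).intervalIntegrable_of_Icc ht.1)
      ⟨Icc t₀ t₁, self_mem_nhdsWithin, hH.aestronglyMeasurable measurableSet_Icc⟩ (hH t ht)
  exact (hprimitive.const_add _).congr
    (fun s hs => intervalIntegral_eq_add_integral_intervalIntegral_deriv hab hderiv hf hft hs)
    (intervalIntegral_eq_add_integral_intervalIntegral_deriv hab hderiv hf hft ht)

end ParametricIntegral

theorem sum_sub_eq_sum_vertex_incidence {V E : Type} [Fintype V] [Fintype E] [DecidableEq V]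
    (src dst : E → V) (φ ψ : E → ℝ) :
    ∑ e, (φ e - ψ e)
      = ∑ w, ∑ e, ((if dst e = w then φ e else 0) - (if src e = w then ψ e else 0)) := by
  rw [Finset.sum_comm]
  refine Finset.sum_congr rfl fun e _ => ?_
  simp [Finset.sum_sub_distrib]

theorem sum_mul_sub_mul_eq_zero_of_kirchhoff {V E : Type} [Fintype V] [Fintype E] [DecidableEq V]
    (src dst : E → V) (q₀ q₁ h₀ h₁ : E → ℝ)
    (hvertex : ∀ w,
      ((∑ e, ((if dst e = w then q₁ e else 0) - (if src e = w then q₀ e else 0))) = 0 ∧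
        ∃ H, ∀ e, (src e = w → h₀ e = H) ∧ (dst e = w → h₁ e = H)) ∨
      ∀ e, (src e = w → q₀ e = 0) ∧ (dst e = w → q₁ e = 0)) :
    ∑ e, (q₁ e * h₁ e - q₀ e * h₀ e) = 0 := by
  rw [sum_sub_eq_sum_vertex_incidence src dst]
  refine Finset.sum_eq_zero fun w _ => ?_
  rcases hvertex w with ⟨hkirchhoff, H, hH⟩ | hzero
  · calc _ = ∑ e, H * ((if dst e = w then q₁ e else 0) - (if src e = w then q₀ e else 0)) := by
          refine Finset.sum_congr rfl fun e _ => ?_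
          split_ifs with hd hs hs <;> simp [(hH e).1, (hH e).2, *] <;> ring
      _ = 0 := by rw [← Finset.mul_sum, hkirchhoff, mul_zero]
  · refine Finset.sum_eq_zero fun e _ => ?_
    split_ifs with hd hs hs <;> simp [(hzero e).1, (hzero e).2, *]

section EnergyDensities

variable (a b c γ : ℝ)

noncomputable section

def energyDensity (ρ m : ℝ) : ℝ := m ^ 2 / (2 * ρ) + c * ρ ^ γ / (γ - 1)

def energyDensityDeriv (ρ m ρ' m' : ℝ) : ℝ :=
  m * m' / ρ - m ^ 2 * ρ' / (2 * ρ ^ 2) + c * γ / (γ - 1) * ρ ^ (γ - 1) * ρ'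

/-- The quantity equalised at interior vertices by coupling condition (iii); `m` times it is
the energy flux. -/
def totalEnthalpy (ρ m mx : ℝ) : ℝ :=
  m ^ 2 / (2 * ρ ^ 2) + c * γ / (γ - 1) * ρ ^ (γ - 1) - a / ρ ^ 2 * mx

def dissipationDensity (ρ m mx : ℝ) : ℝ := a * mx ^ 2 / ρ ^ 2 + b * |m| ^ 3 / ρ ^ 2

end

variable {a b c γ}

theorem HasDerivAt.energyDensity {ρ m : ℝ → ℝ} {ρ' m' t : ℝ} (hρ : HasDerivAt ρ ρ' t)
    (hm : HasDerivAt m m' t) (hρ₀ : ρ t ≠ 0) :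
    HasDerivAt (fun s => energyDensity c γ (ρ s) (m s))
      (energyDensityDeriv c γ (ρ t) (m t) ρ' m') t := by
  have hkinetic := (hm.pow 2).div (hρ.const_mul 2) (mul_ne_zero two_ne_zero hρ₀)
  have hpotential := ((hρ.rpow_const (p := γ) (Or.inl hρ₀)).const_mul c).div_const (γ - 1)
  refine (hkinetic.add hpotential).congr_deriv ?_
  simp only [energyDensityDeriv, Pi.pow_apply]
  field_simp
  ring

section Continuity

variable {X : Type*} [TopologicalSpace X] {s : Set X} {ρ m ρ' m' mx : X → ℝ}

theorem ContinuousOn.energyDensity (hρ : ContinuousOn ρ s) (hm : ContinuousOn m s)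
    (hρ₀ : ∀ x ∈ s, ρ x ≠ 0) : ContinuousOn (fun x => energyDensity c γ (ρ x) (m x)) s :=
  ((hm.pow 2).div (continuousOn_const.mul hρ) fun x hx => mul_ne_zero two_ne_zero (hρ₀ x hx)).add
    ((continuousOn_const.mul (hρ.rpow_const fun x hx => Or.inl (hρ₀ x hx))).div_const _)

theorem ContinuousOn.energyDensityDeriv (hρ : ContinuousOn ρ s) (hm : ContinuousOn m s)
    (hρ' : ContinuousOn ρ' s) (hm' : ContinuousOn m' s) (hρ₀ : ∀ x ∈ s, ρ x ≠ 0) :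
    ContinuousOn (fun x => energyDensityDeriv c γ (ρ x) (m x) (ρ' x) (m' x)) s :=
  (((hm.mul hm').div hρ hρ₀).sub ((((hm.pow 2).mul hρ').div (continuousOn_const.mul (hρ.pow 2)))
    fun x hx => mul_ne_zero two_ne_zero (pow_ne_zero 2 (hρ₀ x hx)))).add
    ((continuousOn_const.mul (hρ.rpow_const fun x hx => Or.inl (hρ₀ x hx))).mul hρ')

theorem ContinuousOn.dissipationDensity (hρ : ContinuousOn ρ s) (hm : ContinuousOn m s)
    (hmx : ContinuousOn mx s) (hρ₀ : ∀ x ∈ s, ρ x ≠ 0) :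
    ContinuousOn (fun x => dissipationDensity a b (ρ x) (m x) (mx x)) s :=
  have hρ₂ : ∀ x ∈ s, ρ x ^ 2 ≠ 0 := fun x hx => pow_ne_zero 2 (hρ₀ x hx)
  ((continuousOn_const.mul (hmx.pow 2)).div (hρ.pow 2) hρ₂).add
    ((continuousOn_const.mul (hm.abs.pow 3)).div (hρ.pow 2) hρ₂)

end Continuity

end EnergyDensities

section EnergyFlux

variable {a b c γ : ℝ}

/-- Multiply the momentum equation by `m/ρ` and the mass equation by `P'(ρ) - m²/(2ρ²)`,
and add. -/
theorem HasDerivAt.mul_totalEnthalpy {ρ m mx : ℝ → ℝ} {x ρx ρt mt F G : ℝ} (hγ : γ ≠ 1)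
    (hρ : HasDerivAt ρ ρx x) (hm : HasDerivAt m (mx x) x)
    (hF : HasDerivAt (fun y => m y ^ 2 / ρ y + c * ρ y ^ γ) F x)
    (hG : HasDerivAt (fun y => mx y / ρ y ^ 2) G x)
    (hmass : ρt + mx x = 0) (hmomentum : mt + F = a * ρ x * G - b * |m x| * m x / ρ x)
    (hρ₀ : 0 < ρ x) :
    HasDerivAt (fun y => m y * totalEnthalpy a c γ (ρ y) (m y) (mx y))
      (-energyDensityDeriv c γ (ρ x) (m x) ρt mt - dissipationDensity a b (ρ x) (m x) (mx x))
      x := by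
  have hρ₀' : ρ x ≠ 0 := hρ₀.ne'
  have hF' := ((hm.pow 2).div hρ hρ₀').add ((hρ.rpow_const (p := γ) (Or.inl hρ₀')).const_mul c)
  have hH := (((hm.pow 2).div ((hρ.pow 2).const_mul 2)
      (mul_ne_zero two_ne_zero (pow_ne_zero 2 hρ₀'))).add
    ((hρ.rpow_const (p := γ - 1) (Or.inl hρ₀')).const_mul (c * γ / (γ - 1)))).sub
    (hG.const_mul a)
  have hflux : (fun y => m y * totalEnthalpy a c γ (ρ y) (m y) (mx y)) = fun y => m y *
      (m y ^ 2 / (2 * ρ y ^ 2) + c * γ / (γ - 1) * ρ y ^ (γ - 1) - a * (mx y / ρ y ^ 2)) := by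
    funext y
    simp only [totalEnthalpy]
    ring
  rw [hflux]
  refine (hm.mul hH).congr_deriv ?_
  have hmt : mt = -F + a * ρ x * G - b * |m x| * m x / ρ x := by linarith
  have hρt : ρt = -mx x := by linarith
  have hpow₁ : ρ x ^ (γ - 1) = ρ x ^ γ / ρ x := by rw [Real.rpow_sub hρ₀, Real.rpow_one]
  have hpow₂ : ρ x ^ (γ - 1 - 1) = ρ x ^ γ / ρ x / ρ x := by
    rw [Real.rpow_sub hρ₀, Real.rpow_one, hpow₁]
  have habs : |m x| ^ 3 = m x ^ 2 * |m x| := by rw [pow_succ, sq_abs]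
  have hγ₁ : γ - 1 ≠ 0 := sub_ne_zero.mpr hγ
  simp only [energyDensityDeriv, dissipationDensity, hmt, hF.unique hF', hρt, habs, hpow₁, hpow₂,
    Pi.pow_apply, Pi.add_apply, Pi.sub_apply, Pi.div_apply]
  field_simp
  ring

end EnergyFlux

namespace SmoothSolution

variable {V E : Type} [Fintype V] [Fintype E] [DecidableEq V] {src dst : E → V} {ℓ : E → ℝ}
  {γ : ℝ} {a b c : E → ℝ} {T : ℝ} {ρ m ρt ρx mt mx mxx : E → ℝ → ℝ → ℝ}
  (hsol : SmoothSolution src dst ℓ γ a b c T ρ m ρt ρx mt mx mxx)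
include hsol

theorem hasDerivWithinAt_edge_mass (e : E) (hℓ : 0 ≤ ℓ e) {t : ℝ} (ht : t ∈ Icc 0 T) :
    HasDerivWithinAt (fun s => ∫ x in (0 : ℝ)..ℓ e, ρ e s x) (-(m e t (ℓ e) - m e t 0))
      (Icc 0 T) t := by
  obtain ⟨-, hder, hρc, -, hρtc, -, -, hmxc, -, hmass, -⟩ := hsol
  have hrate : ∫ x in (0 : ℝ)..ℓ e, ρt e t x = -(m e t (ℓ e) - m e t 0) := by
    rw [← integral_eq_sub_of_hasDerivAt (f := m e t)
      (fun x hx => (hder e t ht x (uIcc_of_le hℓ ▸ hx)).2.2.2.1)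
      (((hmxc e).uncurry_left t ht).mono (uIcc_of_le hℓ).subset).intervalIntegrable,
      ← intervalIntegral.integral_neg]
    exact integral_congr fun x hx =>
      eq_neg_of_add_eq_zero_left (hmass e t ht x (uIcc_of_le hℓ ▸ hx))
  exact hrate ▸ hasDerivWithinAt_intervalIntegral_of_continuousOn hℓ
    (fun s hs x hx => (hder e s hs x hx).1) (hρc e) (hρtc e) ht

theorem hasDerivWithinAt_edge_energy (e : E) (hℓ : 0 ≤ ℓ e) (hγ : γ ≠ 1) {t : ℝ}
    (ht : t ∈ Icc 0 T) :
    HasDerivWithinAt (fun s => ∫ x in (0 : ℝ)..ℓ e, energyDensity (c e) γ (ρ e s x) (m e s x))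
      (-(m e t (ℓ e) * totalEnthalpy (a e) (c e) γ (ρ e t (ℓ e)) (m e t (ℓ e)) (mx e t (ℓ e))
          - m e t 0 * totalEnthalpy (a e) (c e) γ (ρ e t 0) (m e t 0) (mx e t 0))
        - ∫ x in (0 : ℝ)..ℓ e, dissipationDensity (a e) (b e) (ρ e t x) (m e t x) (mx e t x))
      (Icc 0 T) t := by
  obtain ⟨⟨ρlow, hρlow, hlow⟩, hder, hρc, hmc, hρtc, -, hmtc, hmxc, -, hmass, hmomentum, -⟩ := hsol
  have hpos {s x : ℝ} (hs : s ∈ Icc 0 T) (hx : x ∈ Icc 0 (ℓ e)) : 0 < ρ e s x :=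
    hρlow.trans_le (hlow e s hs x hx)
  have hρ₀ : ∀ q ∈ Icc 0 T ×ˢ Icc 0 (ℓ e), ρ e q.1 q.2 ≠ 0 := fun q hq => (hpos hq.1 hq.2).ne'
  have hrateC : ContinuousOn (uncurry fun s x =>
      energyDensityDeriv (c e) γ (ρ e s x) (m e s x) (ρt e s x) (mt e s x))
      (Icc 0 T ×ˢ Icc 0 (ℓ e)) :=
    (hρc e).energyDensityDeriv (hmc e) (hρtc e) (hmtc e) hρ₀
  have hdissC : ContinuousOn (fun x => dissipationDensity (a e) (b e) (ρ e t x) (m e t x)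
      (mx e t x)) (Icc 0 (ℓ e)) :=
    ((hρc e).dissipationDensity (hmc e) (hmxc e) hρ₀).uncurry_left
      (f := fun s x => dissipationDensity (a e) (b e) (ρ e s x) (m e s x) (mx e s x)) t ht
  have hrate : ∫ x in (0 : ℝ)..ℓ e, energyDensityDeriv (c e) γ (ρ e t x) (m e t x) (ρt e t x)
        (mt e t x) =
      -(m e t (ℓ e) * totalEnthalpy (a e) (c e) γ (ρ e t (ℓ e)) (m e t (ℓ e)) (mx e t (ℓ e))
          - m e t 0 * totalEnthalpy (a e) (c e) γ (ρ e t 0) (m e t 0) (mx e t 0))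
        - ∫ x in (0 : ℝ)..ℓ e, dissipationDensity (a e) (b e) (ρ e t x) (m e t x) (mx e t x) := by
    have hrateI := ((hrateC.uncurry_left t ht).mono (uIcc_of_le hℓ).subset).intervalIntegrable
      (μ := volume)
    have hdissI := (hdissC.mono (uIcc_of_le hℓ).subset).intervalIntegrable (μ := volume)
    have hFTC := integral_eq_sub_of_hasDerivAt
      (f := fun x => m e t x * totalEnthalpy (a e) (c e) γ (ρ e t x) (m e t x) (mx e t x))
      (fun x hx => by
        rw [uIcc_of_le hℓ] at hx
        obtain ⟨F, G, hF, hG, hmom⟩ := hmomentum e t ht x hx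
        exact HasDerivAt.mul_totalEnthalpy hγ (hder e t ht x hx).2.1 (hder e t ht x hx).2.2.2.1
          hF hG (hmass e t ht x hx) hmom (hpos ht hx))
      (hrateI.neg.sub hdissI)
    rw [integral_sub hrateI.neg hdissI] at hFTC
    simp only [Pi.neg_apply, intervalIntegral.integral_neg] at hFTC
    linarith
  exact hrate ▸ hasDerivWithinAt_intervalIntegral_of_continuousOn hℓ
    (fun s hs x hx => (hder e s hs x hx).1.energyDensity (hder e s hs x hx).2.2.1
      (hpos hs hx).ne')
    ((hρc e).energyDensity (hmc e) hρ₀) hrateC ht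

theorem sum_flux_mul_eq_zero {t : ℝ} (ht : t ∈ Icc 0 T) (h₀ h₁ : E → ℝ)
    (hh : ∀ w, 2 ≤ (Finset.univ.filter fun e : E => src e = w ∨ dst e = w).card →
      ∃ H, ∀ e, (src e = w → h₀ e = H) ∧ (dst e = w → h₁ e = H)) :
    ∑ e, (m e t (ℓ e) * h₁ e - m e t 0 * h₀ e) = 0 := by
  obtain ⟨-, -, -, -, -, -, -, -, -, -, -, hcoupling, hboundary⟩ := hsol
  refine sum_mul_sub_mul_eq_zero_of_kirchhoff src dst _ _ h₀ h₁ fun w => ?_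
  by_cases hw : 2 ≤ (Finset.univ.filter fun e : E => src e = w ∨ dst e = w).card
  · exact .inl ⟨(hcoupling w hw t ht).1, hh w hw⟩
  · exact .inr (hboundary w (not_le.mp hw) t ht)

theorem sum_mass_flux_eq_zero {t : ℝ} (ht : t ∈ Icc 0 T) :
    ∑ e, (m e t (ℓ e) - m e t 0) = 0 := by
  simpa using
    hsol.sum_flux_mul_eq_zero ht 1 1 fun _ _ => ⟨1, fun _ => ⟨fun _ => rfl, fun _ => rfl⟩⟩

theorem sum_energy_flux_eq_zero {t : ℝ} (ht : t ∈ Icc 0 T) :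
    ∑ e, (m e t (ℓ e) * totalEnthalpy (a e) (c e) γ (ρ e t (ℓ e)) (m e t (ℓ e)) (mx e t (ℓ e))
      - m e t 0 * totalEnthalpy (a e) (c e) γ (ρ e t 0) (m e t 0) (mx e t 0)) = 0 :=
  hsol.sum_flux_mul_eq_zero ht _ _ fun w hw => by
    obtain ⟨-, -, -, -, -, -, -, -, -, -, -, hcoupling, -⟩ := hsol
    exact (hcoupling w hw t ht).2

end SmoothSolution

theorem balance_of_mass_and_energy_general
    {V E : Type} [Fintype V] [Fintype E] [DecidableEq V]
    (src dst : E → V) (ℓ : E → ℝ) (hℓ : ∀ e, 0 < ℓ e)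
    (γ : ℝ) (hγ : 1 < γ) (a b c : E → ℝ)
    (T : ℝ)
    (ρ m ρt ρx mt mx mxx : E → ℝ → ℝ → ℝ)
    (hsol : SmoothSolution src dst ℓ γ a b c T ρ m ρt ρx mt mx mxx)
    (t : ℝ) (ht : t ∈ Set.Icc 0 T) :
    HasDerivWithinAt (fun s => ∑ e, ∫ x in (0 : ℝ)..(ℓ e), ρ e s x)
      0 (Set.Icc 0 T) t ∧
    HasDerivWithinAt (fun s => ∑ e, ∫ x in (0 : ℝ)..(ℓ e),
        (m e s x ^ 2 / (2 * ρ e s x) + c e * ρ e s x ^ γ / (γ - 1)))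
      (-(∑ e, ∫ x in (0 : ℝ)..(ℓ e),
          (a e * mx e t x ^ 2 / ρ e t x ^ 2 + b e * |m e t x| ^ 3 / ρ e t x ^ 2)))
      (Set.Icc 0 T) t := by
  constructor
  · have hmass := HasDerivWithinAt.fun_sum (u := Finset.univ)
      fun e _ => hsol.hasDerivWithinAt_edge_mass e (hℓ e).le ht
    rwa [Finset.sum_neg_distrib, hsol.sum_mass_flux_eq_zero ht, neg_zero] at hmass
  · have henergy := HasDerivWithinAt.fun_sum (u := Finset.univ)
      fun e _ => hsol.hasDerivWithinAt_edge_energy e (hℓ e).le hγ.ne' ht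
    rwa [Finset.sum_sub_distrib, Finset.sum_neg_distrib, hsol.sum_energy_flux_eq_zero ht,
      neg_zero, zero_sub] at henergy

/-- **Balance of mass and energy (Lemma 3.2).**  Let `(ρ, m)` be a smooth solution
on `[0,T]`.  Then for every `t ∈ [0,T]` the total mass
`M(t) = Σ_e ∫_0^{ℓ_e} ρ_e(t,x) dx` is differentiable with `d/dt M(t) = 0`, and the
total energy `E(t) = Σ_e ∫_0^{ℓ_e} ( m²/(2ρ) + P(ρ) ) dx` is differentiable with
`d/dt E(t) + D(t) = 0`, where
`D(t) = Σ_e ∫_0^{ℓ_e} ( a_e |∂ₓ m|²/ρ² + b_e |m|³/ρ² ) dx` is the dissipation. -/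
theorem balance_of_mass_and_energy
    {V E : Type} [Fintype V] [Fintype E] [DecidableEq V]
    (src dst : E → V) (ℓ : E → ℝ) (hℓ : ∀ e, 0 < ℓ e)
    (γ : ℝ) (hγ : 1 < γ) (a b c : E → ℝ)
    (ha : ∀ e, 0 ≤ a e) (hb : ∀ e, 0 ≤ b e) (hc : ∀ e, 0 < c e)
    (T : ℝ) (hT : 0 ≤ T)
    (ρ m ρt ρx mt mx mxx : E → ℝ → ℝ → ℝ)
    (hsol : SmoothSolution src dst ℓ γ a b c T ρ m ρt ρx mt mx mxx)
    (t : ℝ) (ht : t ∈ Set.Icc 0 T) :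
    HasDerivWithinAt (fun s => ∑ e, ∫ x in (0 : ℝ)..(ℓ e), ρ e s x)
      0 (Set.Icc 0 T) t ∧
    HasDerivWithinAt (fun s => ∑ e, ∫ x in (0 : ℝ)..(ℓ e),
        (m e s x ^ 2 / (2 * ρ e s x) + c e * ρ e s x ^ γ / (γ - 1)))
      (-(∑ e, ∫ x in (0 : ℝ)..(ℓ e),
          (a e * mx e t x ^ 2 / ρ e t x ^ 2 + b e * |m e t x| ^ 3 / ρ e t x ^ 2)))
      (Set.Icc 0 T) t :=
  balance_of_mass_and_energy_general src dst ℓ hℓ γ hγ a b c T ρ m ρt ρx mt mx mxx hsol t ht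
end

section
/- Pointwise reformulation of the momentum equation (key identity in the proof of Lemma 3.1): Let U ⊆ ℝ² be open and let ρ, m : U → ℝ (arguments (t,x)) be such that ρ is continuously differentiable and ρ > 0 on U, and m is continuously differentiable with ∂_x m continuously differentiable in x. Let a, b ≥ 0, c > 0 and γ > 1 be constants, and set p(ρ) = c ρ^γ and P′(ρ) = c γ ρ^{γ−1}/(γ−1). Assume that on U: ∂_t ρ + ∂_x m = 0 and ∂_t m + ∂_x( m²/ρ + p(ρ) ) = a ρ ∂_x( ρ^{−2} ∂_x m ) − b |m| m/ρ. Then at every point of U: (1/ρ) ∂_t m − (m/(2ρ²)) ∂_t ρ = −∂_x( m²/(2ρ²) + P′(ρ) − (a/ρ²) ∂_x m ) − (m/(2ρ²)) ∂_x m − b |m| m/ρ². -/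
/-!
Along a slice `t = const`, dividing the spatial derivative of the momentum flux `m²/ρ + c ρ^γ`
by `ρ` gives the derivative of the Bernoulli quantity `m²/(2ρ²) + P'(ρ)` up to the correction
`m ∂ₓm / ρ²`: the kinetic part by the quotient rule, the pressure part because the enthalpy
`P'(ρ) = c γ ρ^(γ-1)/(γ-1)` satisfies `∂ₓ P'(ρ) = ∂ₓ p(ρ) / ρ`. Dividing the momentum equation by
`ρ` and using the continuity equation `∂ₜρ = -∂ₓm` then yields the identity.
-/

variable {r u : ℝ → ℝ} {r' u' x : ℝ}

theorem hasDerivAt_sq_div_two_mul_sq (hu : HasDerivAt u u' x) (hr : HasDerivAt r r' x)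
    (hx : r x ≠ 0) {q' : ℝ} (hq : HasDerivAt (fun y => u y ^ 2 / r y) q' x) :
    HasDerivAt (fun y => u y ^ 2 / (2 * r y ^ 2)) (q' / r x - u x * u' / r x ^ 2) x := by
  rw [hq.unique ((hu.fun_pow 2).fun_div hr hx)]
  refine ((hu.fun_pow 2).fun_div ((hr.fun_pow 2).const_mul 2) (by positivity)).congr_deriv ?_
  field_simp
  ring

theorem hasDerivAt_enthalpy {c γ p' : ℝ} (hr : HasDerivAt r r' x) (hx : r x ≠ 0) (hγ : γ ≠ 1)
    (hp : HasDerivAt (fun y => c * r y ^ γ) p' x) :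
    HasDerivAt (fun y => c * γ / (γ - 1) * r y ^ (γ - 1)) (p' / r x) x := by
  have hγ' : γ - 1 ≠ 0 := sub_ne_zero.mpr hγ
  rw [hp.unique ((hr.rpow_const (Or.inl hx)).const_mul c)]
  refine ((hr.rpow_const (Or.inl hx)).const_mul (c * γ / (γ - 1))).congr_deriv ?_
  rw [Real.rpow_sub_one hx (γ - 1), Real.rpow_sub_one hx γ]
  field_simp

theorem hasDerivAt_bernoulli {c γ F : ℝ} (hu : HasDerivAt u u' x) (hr : HasDerivAt r r' x)
    (hx : r x ≠ 0) (hγ : γ ≠ 1) (hF : HasDerivAt (fun y => u y ^ 2 / r y + c * r y ^ γ) F x) :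
    HasDerivAt (fun y => u y ^ 2 / (2 * r y ^ 2) + c * γ / (γ - 1) * r y ^ (γ - 1))
      (F / r x - u x * u' / r x ^ 2) x := by
  have hq := (hu.fun_pow 2).fun_div hr hx
  have hp := (hr.rpow_const (p := γ) (Or.inl hx)).const_mul c
  rw [hF.unique (hq.add hp)]
  refine ((hasDerivAt_sq_div_two_mul_sq hu hr hx hq).add
    (hasDerivAt_enthalpy hr hx hγ hp)).congr_deriv ?_
  ring

theorem momentum_pointwise_reformulation_general
    (U : Set (ℝ × ℝ))
    (ρ m ρt ρx mt mx mxx : ℝ × ℝ → ℝ)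
    (a b c γ : ℝ) (hγ : 1 < γ)
    (hρpos : ∀ p ∈ U, 0 < ρ p)
    (hder : ∀ p ∈ U,
      HasDerivAt (fun s => ρ (s, p.2)) (ρt p) p.1 ∧
      HasDerivAt (fun y => ρ (p.1, y)) (ρx p) p.2 ∧
      HasDerivAt (fun s => m (s, p.2)) (mt p) p.1 ∧
      HasDerivAt (fun y => m (p.1, y)) (mx p) p.2 ∧
      HasDerivAt (fun y => mx (p.1, y)) (mxx p) p.2)
    (hmass : ∀ p ∈ U, ρt p + mx p = 0)
    (hmom : ∀ p ∈ U, ∃ F G : ℝ,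
      HasDerivAt (fun y => m (p.1, y) ^ 2 / ρ (p.1, y) + c * ρ (p.1, y) ^ γ) F p.2 ∧
      HasDerivAt (fun y => mx (p.1, y) / ρ (p.1, y) ^ 2) G p.2 ∧
      mt p + F = a * ρ p * G - b * |m p| * m p / ρ p) :
    ∀ p ∈ U,
      HasDerivAt (fun y => m (p.1, y) ^ 2 / (2 * ρ (p.1, y) ^ 2)
          + c * γ / (γ - 1) * ρ (p.1, y) ^ (γ - 1)
          - a / ρ (p.1, y) ^ 2 * mx (p.1, y))
        (-((1 / ρ p) * mt p - m p / (2 * ρ p ^ 2) * ρt p)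
          - m p / (2 * ρ p ^ 2) * mx p - b * |m p| * m p / ρ p ^ 2) p.2 := by
  intro p hp
  obtain ⟨-, hρx, -, hmx, -⟩ := hder p hp
  obtain ⟨F, G, hF, hG, hFG⟩ := hmom p hp
  have hρ : ρ p ≠ 0 := (hρpos p hp).ne'
  have hvisc : HasDerivAt (fun y => a / ρ (p.1, y) ^ 2 * mx (p.1, y)) (a * G) p.2 := by
    simpa only [div_mul_eq_mul_div, mul_div_assoc] using hG.const_mul a
  refine ((hasDerivAt_bernoulli hmx hρx hρ hγ.ne' hF).sub hvisc).congr_deriv ?_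
  have hρt : ρt p = -mx p := by linarith [hmass p hp]
  have hmt : mt p = a * ρ p * G - b * |m p| * m p / ρ p - F := by linarith
  rw [hmt, hρt]
  field_simp
  ring

/-- **Pointwise reformulation of the momentum equation** (key identity in the proof of
Lemma 3.1).  Let `U ⊆ ℝ²` be open and let `ρ, m : U → ℝ` (arguments `(t,x)`) be such that
`ρ` is continuously differentiable and positive on `U`, `m` is continuously differentiable,
and `∂ₓ m` is continuously differentiable in `x`; the functions `ρt, ρx, mt, mx, mxx`
denote the corresponding partial derivatives.  Assume the continuity equation
`∂ₜ ρ + ∂ₓ m = 0` and the momentum equation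
`∂ₜ m + ∂ₓ(m²/ρ + c ρ^γ) = a ρ ∂ₓ(ρ⁻² ∂ₓ m) - b |m| m/ρ` hold on `U`.  Then at every point
of `U` the function `x ↦ m²/(2ρ²) + P'(ρ) - (a/ρ²) ∂ₓ m` (with
`P'(ρ) = c γ/(γ-1) ρ^(γ-1)`) is differentiable in `x` with
`(1/ρ) ∂ₜ m - (m/(2ρ²)) ∂ₜ ρ = -∂ₓ( m²/(2ρ²) + P'(ρ) - (a/ρ²) ∂ₓ m )
  - (m/(2ρ²)) ∂ₓ m - b |m| m/ρ²`. -/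
theorem momentum_pointwise_reformulation
    (U : Set (ℝ × ℝ)) (hU : IsOpen U)
    (ρ m ρt ρx mt mx mxx : ℝ × ℝ → ℝ)
    (a b c γ : ℝ) (ha : 0 ≤ a) (hb : 0 ≤ b) (hc : 0 < c) (hγ : 1 < γ)
    (hρpos : ∀ p ∈ U, 0 < ρ p)
    (hder : ∀ p ∈ U,
      HasDerivAt (fun s => ρ (s, p.2)) (ρt p) p.1 ∧
      HasDerivAt (fun y => ρ (p.1, y)) (ρx p) p.2 ∧
      HasDerivAt (fun s => m (s, p.2)) (mt p) p.1 ∧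
      HasDerivAt (fun y => m (p.1, y)) (mx p) p.2 ∧
      HasDerivAt (fun y => mx (p.1, y)) (mxx p) p.2)
    (hρc : ContinuousOn ρ U) (hmc : ContinuousOn m U)
    (hρtc : ContinuousOn ρt U) (hρxc : ContinuousOn ρx U)
    (hmtc : ContinuousOn mt U) (hmxc : ContinuousOn mx U)
    (hmxxc : ∀ p ∈ U, ContinuousWithinAt (fun y => mxx (p.1, y)) {y | (p.1, y) ∈ U} p.2)
    (hmass : ∀ p ∈ U, ρt p + mx p = 0)
    (hmom : ∀ p ∈ U, ∃ F G : ℝ,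
      HasDerivAt (fun y => m (p.1, y) ^ 2 / ρ (p.1, y) + c * ρ (p.1, y) ^ γ) F p.2 ∧
      HasDerivAt (fun y => mx (p.1, y) / ρ (p.1, y) ^ 2) G p.2 ∧
      mt p + F = a * ρ p * G - b * |m p| * m p / ρ p) :
    ∀ p ∈ U,
      HasDerivAt (fun y => m (p.1, y) ^ 2 / (2 * ρ (p.1, y) ^ 2)
          + c * γ / (γ - 1) * ρ (p.1, y) ^ (γ - 1)
          - a / ρ (p.1, y) ^ 2 * mx (p.1, y))
        (-((1 / ρ p) * mt p - m p / (2 * ρ p ^ 2) * ρt p)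
          - m p / (2 * ρ p ^ 2) * mx p - b * |m p| * m p / ρ p ^ 2) p.2 :=
  momentum_pointwise_reformulation_general U ρ m ρt ρx mt mx mxx a b c γ hγ hρpos hder hmass hmom
end
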